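/- arXiv:1601.00207 — 2 statements merged into one kernel-verified Lean document; each statement's English description precedes it below -/
import Mathlib

section
/- Suppose 1 ∈ U and U contains elements u, v, w such that 1, u, v, w are pairwise non-±-equal. Then R(U) equals the ℤ[P]-submodule of ℂ generated by the elementary monomials; that is, R(U) is exactly the set of finite sums Σᵢ cᵢ·zᵢ with each cᵢ ∈ ℤ[P] and each zᵢ an elementary monomial. -/
open Complex

/-- The bracket `[x,y] = x * conj y - y * conj x`. -/
noncomputable def brkt (x y : ℂ) : ℂ := x * (starRingEnd ℂ) y - y * (starRingEnd ℂ) x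

/-- `lineInt α β p q` is the intersection point `I_{α,β}(p,q)` of the line through `p`
with direction `α` and the line through `q` with direction `β` (for unit `α ≠ ±β`),
given by the formula of Buhler et al. -/
noncomputable def lineInt (α β p q : ℂ) : ℂ :=
  brkt α p / brkt α β * β + brkt β q / brkt β α * α

/-- The sets `S n` in the inductive construction. -/
def stepSet (U : Set ℂ) : ℕ → Set ℂ
  | 0 => {0, 1}
  | n + 1 => {z | ∃ α ∈ U, ∃ β ∈ U, α ≠ β ∧ α ≠ -β ∧
      ∃ p ∈ stepSet U n, ∃ q ∈ stepSet U n, z = lineInt α β p q}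

/-- `RU U = ⋃ n, S n`. -/
def RU (U : Set ℂ) : Set ℂ := ⋃ n, stepSet U n

/-- Elementary monomials of `U`. -/
def IsElem (U : Set ℂ) (z : ℂ) : Prop :=
  ∃ α ∈ U, ∃ β ∈ U, α ≠ β ∧ α ≠ -β ∧ z = lineInt α β 0 1

/-- Monomials of `U`, defined inductively. -/
inductive IsMonomial (U : Set ℂ) : ℂ → Prop
  | elementary (α β : ℂ) (hα : α ∈ U) (hβ : β ∈ U) (h1 : α ≠ β) (h2 : α ≠ -β) :
      IsMonomial U (lineInt α β 0 1)
  | step (α β m : ℂ) (hα : α ∈ U) (hβ : β ∈ U) (h1 : α ≠ β) (h2 : α ≠ -β)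
      (hm : IsMonomial U m) : IsMonomial U (lineInt α β 0 m)

/-- `P`: the real numbers arising as length-two monomials `I_{γ,δ}(0,z)` on the real axis. -/
def projSet (U : Set ℂ) : Set ℝ :=
  {r | ∃ γ ∈ U, ∃ δ ∈ U, γ ≠ δ ∧ γ ≠ -δ ∧ ∃ z, IsElem U z ∧ (r : ℂ) = lineInt γ δ 0 z}

/-- `m` is a `ℤ[P]`-linear combination of elementary monomials of `U`. -/
def IsZPComb (U : Set ℂ) (m : ℂ) : Prop :=
  ∃ (n : ℕ) (c : Fin n → ℝ) (z : Fin n → ℂ),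
    (∀ i, c i ∈ Subring.closure (projSet U)) ∧ (∀ i, IsElem U (z i)) ∧
    m = ∑ i, (c i : ℂ) * z i

/-! Writing `π_{γ,δ}` for the ℝ-linear projection onto `ℝγ` along `δ`, one has
`I_{α,β}(p, q) = π_{β,α} p + π_{α,β} q`. Hence multiplying a point of `R(U)` by a real number
of `R(U)` stays in `R(U)` (induct on the stage), and for pairwise transverse `u, v, w` the
projections around the triangle `ℝv → ℝu → ℝw → ℝv` compose to `-1`, which writes `x - y` as
an iterated intersection of `x`, `y` and `0`. So `R(U)` is a `ℤ[P]`-module containing the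
elementary monomials.

Conversely, each `π_{γ,δ}` with `γ, δ ∈ U` maps elementary monomials into their `ℤ[P]`-span.
If `δ ≠ ±1` then `π_{γ,δ} z = π_{1,δ}(z) · π_{γ,δ}(1)`, a point of `P` times an elementary
monomial. If `δ = ±1`, then `z` lies on a line `ℝα` and
`π_{γ,1} z = -π_{1,γ}(z) · π_{γ,α}(1)`; a point `w` of `ℝγ` is `π_{γ,ε} w` for a fourth
direction `ε ≠ ±1, ±γ`, which brings us back to the first case. -/

open Submodule

lemma ne_neg_comm {a b : ℂ} (h : a ≠ -b) : b ≠ -a := fun h' => h (by rw [h', neg_neg])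

lemma brkt_swap (x y : ℂ) : brkt y x = -brkt x y := by
  simp only [brkt]; ring

lemma brkt_ne_zero_symm {x y : ℂ} (h : brkt x y ≠ 0) : brkt y x ≠ 0 := by
  rwa [brkt_swap, neg_ne_zero]

lemma brkt_neg_left (x y : ℂ) : brkt (-x) y = -brkt x y := by
  simp only [brkt, map_neg]; ring

lemma brkt_conj (x y : ℂ) : (starRingEnd ℂ) (brkt x y) = -brkt x y := by
  simp only [brkt, map_sub, map_mul, conj_conj]; ring

lemma brkt_add_right (x a b : ℂ) : brkt x (a + b) = brkt x a + brkt x b := by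
  simp only [brkt, map_add]; ring

lemma brkt_mul_right_of_conj_eq {c : ℂ} (hc : (starRingEnd ℂ) c = c) (x y : ℂ) :
    brkt x (c * y) = c * brkt x y := by
  simp only [brkt, map_mul, hc]; ring

lemma conj_brkt_div_brkt (a b c d : ℂ) :
    (starRingEnd ℂ) (brkt a b / brkt c d) = brkt a b / brkt c d := by
  rw [map_div₀, brkt_conj, brkt_conj, neg_div_neg_eq]

lemma brkt_self (x : ℂ) : brkt x x = 0 := sub_self _

lemma ne_of_brkt_ne_zero {α β : ℂ} (h : brkt α β ≠ 0) : α ≠ β := by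
  rintro rfl; exact h (brkt_self α)

lemma ne_neg_of_brkt_ne_zero {α β : ℂ} (h : brkt α β ≠ 0) : α ≠ -β := by
  rintro rfl; apply h; simp only [brkt, map_neg]; ring

lemma brkt_ne_zero {α β : ℂ} (hα : ‖α‖ = 1) (hβ : ‖β‖ = 1) (h : α ≠ β) (h' : α ≠ -β) :
    brkt α β ≠ 0 := by
  have hα0 : α ≠ 0 := norm_ne_zero_iff.mp (by rw [hα]; exact one_ne_zero)
  have hβ0 : β ≠ 0 := norm_ne_zero_iff.mp (by rw [hβ]; exact one_ne_zero)
  have hfac : brkt α β = (α - β) * (α + β) / (α * β) := by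
    rw [brkt, ← Complex.inv_eq_conj hα, ← Complex.inv_eq_conj hβ]; field_simp; ring
  rw [hfac]
  refine div_ne_zero (mul_ne_zero (sub_ne_zero.2 h) fun hs => h' ?_) (mul_ne_zero hα0 hβ0)
  exact eq_neg_of_add_eq_zero_left hs

/-- `I_{γ,δ}(0, q)`: the projection of `q` onto the line `ℝγ` along the direction `δ`. -/
noncomputable def lineProj (γ δ : ℂ) : ℂ →ₗ[ℝ] ℂ where
  toFun q := brkt δ q / brkt δ γ * γ
  map_add' a b := by simp only [brkt_add_right]; ring
  map_smul' r q := by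
    simp only [RingHom.id_apply, Complex.real_smul, brkt_mul_right_of_conj_eq (conj_ofReal r)]
    ring

lemma lineProj_apply (γ δ q : ℂ) : lineProj γ δ q = brkt δ q / brkt δ γ * γ := rfl

lemma lineInt_eq_lineProj_add (α β p q : ℂ) :
    lineInt α β p q = lineProj β α p + lineProj α β q := rfl

lemma lineInt_zero_left (γ δ q : ℂ) : lineInt γ δ 0 q = lineProj γ δ q := by
  rw [lineInt_eq_lineProj_add, map_zero, zero_add]

lemma lineProj_mem_span_singleton (γ δ q : ℂ) : lineProj γ δ q ∈ ℝ ∙ γ := by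
  refine mem_span_singleton.2 ⟨(brkt δ q / brkt δ γ).re, ?_⟩
  rw [Complex.real_smul, Complex.conj_eq_iff_re.1 (conj_brkt_div_brkt _ _ _ _), lineProj_apply]

lemma lineProj_eq_self {γ δ q : ℂ} (h : brkt δ γ ≠ 0) (hq : q ∈ ℝ ∙ γ) : lineProj γ δ q = q := by
  obtain ⟨r, rfl⟩ := mem_span_singleton.1 hq
  rw [map_smul, lineProj_apply, div_self h, one_mul]

lemma lineProj_add_lineProj {α β : ℂ} (h : brkt α β ≠ 0) (q : ℂ) :
    lineProj α β q + lineProj β α q = q := by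
  rw [lineProj_apply, lineProj_apply, brkt_swap α β]
  field_simp
  simp only [brkt]; ring

lemma lineInt_self {α β : ℂ} (h : brkt α β ≠ 0) (p : ℂ) : lineInt α β p p = p := by
  rw [lineInt_eq_lineProj_add, add_comm, lineProj_add_lineProj h]

lemma smul_lineInt (r : ℝ) (α β p q : ℂ) :
    r • lineInt α β p q = lineInt α β (r • p) (r • q) := by
  simp only [lineInt_eq_lineProj_add, map_smul, smul_add]

lemma lineProj_neg_right (γ δ : ℂ) : lineProj γ (-δ) = lineProj γ δ := by
  ext q; simp only [lineProj_apply, brkt_neg_left, neg_div_neg_eq]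

lemma lineProj_mul_of_conj_eq {c : ℂ} (hc : (starRingEnd ℂ) c = c) (γ δ x : ℂ) :
    lineProj γ δ (c * x) = c * lineProj γ δ x := by
  simp only [lineProj_apply, brkt_mul_right_of_conj_eq hc]; ring

lemma lineProj_cycle {u v w t : ℂ} (huv : brkt u v ≠ 0) (huw : brkt u w ≠ 0)
    (hvw : brkt v w ≠ 0) (ht : t ∈ ℝ ∙ v) :
    lineProj v u (lineProj w v (lineProj u w t)) = -t := by
  obtain ⟨r, rfl⟩ := mem_span_singleton.1 ht
  rw [map_smul, map_smul, map_smul,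
    lineProj_apply u w v, lineProj_mul_of_conj_eq (conj_brkt_div_brkt _ _ _ _),
    lineProj_apply w v u, lineProj_mul_of_conj_eq (conj_brkt_div_brkt _ _ _ _),
    lineProj_mul_of_conj_eq (conj_brkt_div_brkt _ _ _ _), lineProj_apply v u w,
    brkt_swap u w, brkt_swap v w, brkt_swap u v]
  field_simp
  exact smul_neg r v

lemma lineProj_eq_mul_lineProj_one (γ δ m : ℂ) (h : brkt δ 1 ≠ 0) :
    lineProj γ δ m = lineProj 1 δ m * lineProj γ δ 1 := by
  rw [lineProj_apply, lineProj_apply, lineProj_apply]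
  rcases eq_or_ne (brkt δ γ) 0 with h0 | h0
  · simp [h0]
  · field_simp

lemma lineProj_one_eq_of_mem {α γ z : ℂ} (hαγ : brkt α γ ≠ 0) (hz : z ∈ ℝ ∙ α) :
    lineProj γ 1 z = -(lineProj 1 γ z * lineProj γ α 1) := by
  obtain ⟨r, rfl⟩ := mem_span_singleton.1 hz
  simp only [lineProj_apply, Complex.real_smul, brkt_mul_right_of_conj_eq (conj_ofReal _)]
  rw [brkt_swap α γ, brkt_swap 1 γ, brkt_swap 1 α]
  field_simp

lemma sub_eq_lineInt {u v w : ℂ} (huv : brkt u v ≠ 0) (huw : brkt u w ≠ 0)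
    (hvw : brkt v w ≠ 0) (x y : ℂ) :
    x - y = lineInt u v (lineInt v w (lineProj u w (lineProj v u y)) (lineProj v u x))
      (lineInt u w (lineProj v w (lineProj u v y)) (lineProj u v x)) := by
  have hx_v := lineProj_mem_span_singleton v u x
  have hx_u := lineProj_mem_span_singleton u v x
  rw [lineInt_eq_lineProj_add, lineInt_eq_lineProj_add v w, lineInt_eq_lineProj_add u w,
    map_add, map_add, lineProj_cycle huv huw hvw (lineProj_mem_span_singleton v u y),
    lineProj_cycle (brkt_ne_zero_symm huv) hvw huw (lineProj_mem_span_singleton u v y),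
    lineProj_eq_self (brkt_ne_zero_symm hvw) hx_v, lineProj_eq_self huv hx_v,
    lineProj_eq_self (brkt_ne_zero_symm huw) hx_u, lineProj_eq_self (brkt_ne_zero_symm huv) hx_u]
  linear_combination lineProj_add_lineProj huv y - lineProj_add_lineProj huv x

section RU

variable {U : Set ℂ}

lemma stepSet_monotone {α β : ℂ} (hα : α ∈ U) (hβ : β ∈ U) (hαβ : brkt α β ≠ 0) :
    Monotone (stepSet U) :=
  monotone_nat_of_le_succ fun _ p hp => ⟨α, hα, β, hβ, ne_of_brkt_ne_zero hαβ,
    ne_neg_of_brkt_ne_zero hαβ, p, hp, p, hp, (lineInt_self hαβ p).symm⟩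

lemma zero_mem_RU : (0 : ℂ) ∈ RU U := Set.mem_iUnion.2 ⟨0, Or.inl rfl⟩

lemma one_mem_RU : (1 : ℂ) ∈ RU U := Set.mem_iUnion.2 ⟨0, Or.inr rfl⟩

lemma isElem_mem_RU {z : ℂ} (hz : IsElem U z) : z ∈ RU U := by
  obtain ⟨α, hα, β, hβ, h, h', rfl⟩ := hz
  exact Set.mem_iUnion.2 ⟨1, α, hα, β, hβ, h, h', 0, Or.inl rfl, 1, Or.inr rfl, rfl⟩

lemma lineInt_mem_RU (hmono : Monotone (stepSet U)) {α β p q : ℂ} (hα : α ∈ U) (hβ : β ∈ U)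
    (h : α ≠ β) (h' : α ≠ -β) (hp : p ∈ RU U) (hq : q ∈ RU U) : lineInt α β p q ∈ RU U := by
  obtain ⟨n, hn⟩ := Set.mem_iUnion.1 hp
  obtain ⟨m, hm⟩ := Set.mem_iUnion.1 hq
  exact Set.mem_iUnion.2 ⟨max n m + 1, α, hα, β, hβ, h, h',
    p, hmono (le_max_left n m) hn, q, hmono (le_max_right n m) hm, rfl⟩

lemma smul_mem_RU (hmono : Monotone (stepSet U)) {r : ℝ} (hr : (r : ℂ) ∈ RU U) {x : ℂ}
    (hx : x ∈ RU U) : r • x ∈ RU U := by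
  obtain ⟨n, hn⟩ := Set.mem_iUnion.1 hx
  clear hx
  induction n generalizing x with
  | zero =>
    rcases hn with rfl | rfl
    · rw [smul_zero]; exact zero_mem_RU
    · rwa [Complex.real_smul, mul_one]
  | succ n ih =>
    obtain ⟨α, hα, β, hβ, h, h', p, hp, q, hq, rfl⟩ := hn
    rw [smul_lineInt]
    exact lineInt_mem_RU hmono hα hβ h h' (ih hp) (ih hq)

def HasTransverseTriple (U : Set ℂ) : Prop :=
  ∃ u ∈ U, ∃ v ∈ U, ∃ w ∈ U, brkt u v ≠ 0 ∧ brkt u w ≠ 0 ∧ brkt v w ≠ 0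

lemma HasTransverseTriple.monotone (hU : HasTransverseTriple U) : Monotone (stepSet U) :=
  let ⟨_, hu, _, hv, _, _, huv, _⟩ := hU
  stepSet_monotone hu hv huv

lemma HasTransverseTriple.sub_mem_RU (hU : HasTransverseTriple U) {x y : ℂ} (hx : x ∈ RU U)
    (hy : y ∈ RU U) : x - y ∈ RU U := by
  obtain ⟨u, hu, v, hv, w, hw, huv, huw, hvw⟩ := hU
  have mem : ∀ {α β p q : ℂ}, α ∈ U → β ∈ U → brkt α β ≠ 0 → p ∈ RU U → q ∈ RU U →
      lineInt α β p q ∈ RU U := fun hα hβ h =>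
    lineInt_mem_RU (stepSet_monotone hu hv huv) hα hβ (ne_of_brkt_ne_zero h)
      (ne_neg_of_brkt_ne_zero h)
  have proj : ∀ {α β q : ℂ}, α ∈ U → β ∈ U → brkt α β ≠ 0 → q ∈ RU U →
      lineProj α β q ∈ RU U := fun hα hβ h hq =>
    lineInt_zero_left _ _ _ ▸ mem hα hβ h zero_mem_RU hq
  have hvu := brkt_ne_zero_symm huv
  rw [sub_eq_lineInt huv huw hvw]
  exact mem hu hv huv (mem hv hw hvw (proj hu hw huw (proj hv hu hvu hy)) (proj hv hu hvu hx))
    (mem hu hw huw (proj hv hw hvw (proj hu hv huv hy)) (proj hu hv huv hx))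

lemma HasTransverseTriple.add_mem_RU (hU : HasTransverseTriple U) {x y : ℂ} (hx : x ∈ RU U)
    (hy : y ∈ RU U) : x + y ∈ RU U := by
  simpa using hU.sub_mem_RU hx (hU.sub_mem_RU zero_mem_RU hy)

lemma HasTransverseTriple.ofReal_mem_RU (hU : HasTransverseTriple U) {c : ℝ}
    (hc : c ∈ Subring.closure (projSet U)) : (c : ℂ) ∈ RU U := by
  induction hc using Subring.closure_induction with
  | mem _ hp =>
    obtain ⟨γ, hγ, δ, hδ, h, h', z, hz, hp⟩ := hp
    rw [hp]
    exact lineInt_mem_RU hU.monotone hγ hδ h h' zero_mem_RU (isElem_mem_RU hz)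
  | zero => exact zero_mem_RU
  | one => exact one_mem_RU
  | add _ _ _ _ ha hb => push_cast; exact hU.add_mem_RU ha hb
  | neg _ _ ha => simpa using hU.sub_mem_RU zero_mem_RU ha
  | mul a _ _ _ ha hb => rw [ofReal_mul, ← Complex.real_smul]; exact smul_mem_RU hU.monotone ha hb

end RU

abbrev coeffRing (U : Set ℂ) : Subring ℝ := Subring.closure (projSet U)

noncomputable def monomialSpan (U : Set ℂ) : Submodule (coeffRing U) ℂ :=
  span (coeffRing U) {z | IsElem U z}

section monomialSpan

variable {U : Set ℂ}

lemma isZPComb_iff_mem_monomialSpan {m : ℂ} : IsZPComb U m ↔ m ∈ monomialSpan U := by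
  rw [monomialSpan, mem_span_set']
  constructor
  · rintro ⟨n, c, z, hc, hz, rfl⟩
    exact ⟨n, fun i => ⟨c i, hc i⟩, fun i => ⟨z i, hz i⟩, by simp [Subring.smul_def]⟩
  · rintro ⟨n, c, z, rfl⟩
    exact ⟨n, fun i => c i, fun i => z i, fun i => (c i).2, fun i => (z i).2,
      by simp [Subring.smul_def]⟩

lemma HasTransverseTriple.monomialSpan_subset_RU (hU : HasTransverseTriple U) :
    (monomialSpan U : Set ℂ) ⊆ RU U := by
  intro m hm
  induction hm using span_induction with
  | mem z hz => exact isElem_mem_RU hz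
  | zero => exact zero_mem_RU
  | add _ _ _ _ hx hy => exact hU.add_mem_RU hx hy
  | smul c _ _ hx => exact smul_mem_RU hU.monotone (hU.ofReal_mem_RU c.2) hx

lemma ofReal_mul_mem_monomialSpan {c : ℝ} (hc : c ∈ coeffRing U) {x : ℂ}
    (hx : x ∈ monomialSpan U) : (c : ℂ) * x ∈ monomialSpan U := by
  simpa [Subring.smul_def, Complex.real_smul] using (monomialSpan U).smul_mem ⟨c, hc⟩ hx

lemma isElem_lineProj_one {γ δ : ℂ} (hγ : γ ∈ U) (hδ : δ ∈ U) (h : γ ≠ δ) (h' : γ ≠ -δ) :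
    IsElem U (lineProj γ δ 1) :=
  ⟨γ, hγ, δ, hδ, h, h', (lineInt_zero_left γ δ 1).symm⟩

lemma exists_mem_projSet_eq_lineProj (h1U : (1 : ℂ) ∈ U) {δ z : ℂ} (hδ : δ ∈ U) (hδ1 : δ ≠ 1)
    (hδ1' : δ ≠ -1) (hz : IsElem U z) : ∃ p ∈ projSet U, (p : ℂ) = lineProj 1 δ z := by
  obtain ⟨p, hp⟩ := mem_span_singleton.1 (lineProj_mem_span_singleton 1 δ z)
  rw [Complex.real_smul, mul_one] at hp
  exact ⟨p, ⟨1, h1U, δ, hδ, hδ1.symm, ne_neg_comm hδ1', z, hz, by rw [hp, lineInt_zero_left]⟩, hp⟩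

lemma lineProj_mem_monomialSpan_of_ne_one {γ δ z : ℂ} (hU : ∀ z ∈ U, ‖z‖ = 1)
    (h1U : (1 : ℂ) ∈ U) (hγ : γ ∈ U) (hδ : δ ∈ U) (h : γ ≠ δ) (h' : γ ≠ -δ) (hδ1 : δ ≠ 1)
    (hδ1' : δ ≠ -1) (hz : IsElem U z) : lineProj γ δ z ∈ monomialSpan U := by
  obtain ⟨p, hp, hpz⟩ := exists_mem_projSet_eq_lineProj h1U hδ hδ1 hδ1' hz
  rw [lineProj_eq_mul_lineProj_one γ δ z (brkt_ne_zero (hU δ hδ) norm_one hδ1 hδ1'), ← hpz]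
  exact ofReal_mul_mem_monomialSpan (Subring.subset_closure hp)
    (subset_span (isElem_lineProj_one hγ hδ h h'))

lemma lineProj_one_mem_monomialSpan {γ z : ℂ} (hU : ∀ z ∈ U, ‖z‖ = 1) (h1U : (1 : ℂ) ∈ U)
    (hε : ∀ γ, ∃ ε ∈ U, ε ≠ 1 ∧ ε ≠ -1 ∧ ε ≠ γ ∧ ε ≠ -γ)
    (hγ : γ ∈ U) (hγ1 : γ ≠ 1) (hγ1' : γ ≠ -1) (hz : IsElem U z) :
    lineProj γ 1 z ∈ monomialSpan U := by
  obtain ⟨ε, hεU, hε1, hε1', hεγ, hεγ'⟩ := hε γ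
  have on_line : ∀ w, IsElem U w → w ∈ ℝ ∙ γ → w ∈ monomialSpan U := fun w hw hwγ =>
    lineProj_eq_self (brkt_ne_zero (hU ε hεU) (hU γ hγ) hεγ hεγ') hwγ ▸
      lineProj_mem_monomialSpan_of_ne_one hU h1U hγ hεU hεγ.symm (ne_neg_comm hεγ') hε1 hε1' hw
  obtain ⟨α, hα, β, hβ, hαβ, hαβ', rfl⟩ := hz
  rw [lineInt_zero_left]
  have hzα := lineProj_mem_span_singleton α β 1
  by_cases hαγ : α = γ ∨ α = -γ
  · have hzγ : lineProj α β 1 ∈ ℝ ∙ γ := by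
      rcases hαγ with rfl | rfl
      · exact hzα
      · rwa [← Set.neg_singleton, span_neg] at hzα
    rw [lineProj_eq_self (brkt_ne_zero norm_one (hU γ hγ) hγ1.symm (ne_neg_comm hγ1')) hzγ]
    exact on_line _ (isElem_lineProj_one hα hβ hαβ hαβ') hzγ
  · obtain ⟨hαγ, hαγ'⟩ := not_or.1 hαγ
    obtain ⟨p, hp, hpz⟩ := exists_mem_projSet_eq_lineProj h1U hγ hγ1 hγ1'
      (isElem_lineProj_one hα hβ hαβ hαβ')
    rw [lineProj_one_eq_of_mem (brkt_ne_zero (hU α hα) (hU γ hγ) hαγ hαγ') hzα, ← hpz,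
      ← neg_mul, ← ofReal_neg]
    exact ofReal_mul_mem_monomialSpan (neg_mem (Subring.subset_closure hp))
      (on_line _ (isElem_lineProj_one hγ hα (Ne.symm hαγ) (ne_neg_comm hαγ'))
        (lineProj_mem_span_singleton γ α 1))

lemma lineProj_isElem_mem_monomialSpan {γ δ z : ℂ} (hU : ∀ z ∈ U, ‖z‖ = 1)
    (h1U : (1 : ℂ) ∈ U) (hε : ∀ γ, ∃ ε ∈ U, ε ≠ 1 ∧ ε ≠ -1 ∧ ε ≠ γ ∧ ε ≠ -γ)
    (hγ : γ ∈ U) (hδ : δ ∈ U) (h : γ ≠ δ) (h' : γ ≠ -δ) (hz : IsElem U z) :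
    lineProj γ δ z ∈ monomialSpan U := by
  by_cases hδ1 : δ = 1 ∨ δ = -1
  · rcases hδ1 with rfl | rfl
    · exact lineProj_one_mem_monomialSpan hU h1U hε hγ h h' hz
    · rw [lineProj_neg_right]
      exact lineProj_one_mem_monomialSpan hU h1U hε hγ (by simpa using h') h hz
  · obtain ⟨hδ1, hδ1'⟩ := not_or.1 hδ1
    exact lineProj_mem_monomialSpan_of_ne_one hU h1U hγ hδ h h' hδ1 hδ1' hz

lemma lineProj_mem_monomialSpan {γ δ m : ℂ} (hU : ∀ z ∈ U, ‖z‖ = 1)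
    (h1U : (1 : ℂ) ∈ U) (hε : ∀ γ, ∃ ε ∈ U, ε ≠ 1 ∧ ε ≠ -1 ∧ ε ≠ γ ∧ ε ≠ -γ)
    (hγ : γ ∈ U) (hδ : δ ∈ U) (h : γ ≠ δ) (h' : γ ≠ -δ) (hm : m ∈ monomialSpan U) :
    lineProj γ δ m ∈ monomialSpan U := by
  induction hm using span_induction with
  | mem z hz => exact lineProj_isElem_mem_monomialSpan hU h1U hε hγ hδ h h' hz
  | zero => simp
  | add _ _ _ _ hx hy => simpa using add_mem hx hy
  | smul c x _ hx => rw [LinearMap.map_smul_of_tower]; exact (monomialSpan U).smul_mem c hx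

lemma one_mem_monomialSpan (hU : ∀ z ∈ U, ‖z‖ = 1) (h1U : (1 : ℂ) ∈ U)
    (hε : ∀ γ, ∃ ε ∈ U, ε ≠ 1 ∧ ε ≠ -1 ∧ ε ≠ γ ∧ ε ≠ -γ) : (1 : ℂ) ∈ monomialSpan U := by
  obtain ⟨ε, hεU, hε1, hε1', -⟩ := hε 1
  rw [← lineProj_eq_self (brkt_ne_zero (hU ε hεU) norm_one hε1 hε1') (mem_span_singleton_self 1)]
  exact subset_span (isElem_lineProj_one h1U hεU hε1.symm (ne_neg_comm hε1'))

lemma RU_subset_monomialSpan (hU : ∀ z ∈ U, ‖z‖ = 1) (h1U : (1 : ℂ) ∈ U)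
    (hε : ∀ γ, ∃ ε ∈ U, ε ≠ 1 ∧ ε ≠ -1 ∧ ε ≠ γ ∧ ε ≠ -γ) : RU U ⊆ monomialSpan U := by
  refine Set.iUnion_subset fun n => ?_
  induction n with
  | zero =>
    rintro m (rfl | rfl)
    · exact zero_mem _
    · exact one_mem_monomialSpan hU h1U hε
  | succ n ih =>
    rintro m ⟨α, hα, β, hβ, h, h', p, hp, q, hq, rfl⟩
    rw [lineInt_eq_lineProj_add]
    exact add_mem (lineProj_mem_monomialSpan hU h1U hε hβ hα (Ne.symm h) (ne_neg_comm h') (ih hp))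
      (lineProj_mem_monomialSpan hU h1U hε hα hβ h h' (ih hq))

end monomialSpan

lemma exists_mem_ne_pm_one_ne_pm {U : Set ℂ} {u v : ℂ} (hu : u ∈ U) (hv : v ∈ U) (hu1 : u ≠ 1)
    (hu1' : u ≠ -1) (hv1 : v ≠ 1) (hv1' : v ≠ -1) (huv : u ≠ v) (huv' : u ≠ -v) (γ : ℂ) :
    ∃ ε ∈ U, ε ≠ 1 ∧ ε ≠ -1 ∧ ε ≠ γ ∧ ε ≠ -γ := by
  by_cases hγ : u = γ ∨ u = -γ
  · refine ⟨v, hv, hv1, hv1', ?_, ?_⟩ <;> rintro rfl <;> rcases hγ with rfl | rfl <;> simp_all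
  · obtain ⟨hγ, hγ'⟩ := not_or.1 hγ
    exact ⟨u, hu, hu1, hu1', hγ, hγ'⟩

theorem stmt12_general (U : Set ℂ) (hU : ∀ z ∈ U, ‖z‖ = 1) (h1U : (1 : ℂ) ∈ U)
    (u v w : ℂ) (hu : u ∈ U) (hv : v ∈ U) (hw : w ∈ U)
    (hu1 : u ≠ 1) (hu1' : u ≠ -1) (hv1 : v ≠ 1) (hv1' : v ≠ -1)
    (huv : u ≠ v) (huv' : u ≠ -v) (huw : u ≠ w) (huw' : u ≠ -w)
    (hvw : v ≠ w) (hvw' : v ≠ -w) :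
    RU U = {m | IsZPComb U m} := by
  have hspan : {m | IsZPComb U m} = monomialSpan U :=
    Set.ext fun _ => isZPComb_iff_mem_monomialSpan
  have htriple : HasTransverseTriple U :=
    ⟨u, hu, v, hv, w, hw, brkt_ne_zero (hU u hu) (hU v hv) huv huv',
      brkt_ne_zero (hU u hu) (hU w hw) huw huw', brkt_ne_zero (hU v hv) (hU w hw) hvw hvw'⟩
  rw [hspan]
  refine (RU_subset_monomialSpan hU h1U ?_).antisymm htriple.monomialSpan_subset_RU
  exact exists_mem_ne_pm_one_ne_pm hu hv hu1 hu1' hv1 hv1' huv huv'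

/-- if `1 ∈ U` and `U` contains `u, v, w` with `1, u, v, w` pairwise
non-±-equal, then `R(U)` is exactly the set of `ℤ[P]`-linear combinations of
elementary monomials. -/
theorem stmt12 (U : Set ℂ) (hU : ∀ z ∈ U, ‖z‖ = 1) (h1U : (1 : ℂ) ∈ U)
    (u v w : ℂ) (hu : u ∈ U) (hv : v ∈ U) (hw : w ∈ U)
    (hu1 : u ≠ 1) (hu1' : u ≠ -1) (hv1 : v ≠ 1) (hv1' : v ≠ -1)
    (hw1 : w ≠ 1) (hw1' : w ≠ -1)
    (huv : u ≠ v) (huv' : u ≠ -v) (huw : u ≠ w) (huw' : u ≠ -w)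
    (hvw : v ≠ w) (hvw' : v ≠ -w) :
    RU U = {m | IsZPComb U m} :=
  stmt12_general U hU h1U u v w hu hv hw hu1 hu1' hv1 hv1' huv huv' huw huw' hvw hvw'
end

section
/- Let α be a unit-magnitude complex number such that 1, α, α², α³ are pairwise non-±-equal. Then I_{α,α³}(0,1) · I_{α,α²}(0,1) = I_{α²,α³}(0,1). -/
open Complex

/-! On the unit circle `conj z = z⁻¹`, which turns `I_{α,β}(0,1)` into the rational function
`α² (β² - 1) / (β² - α²)`; for `β = α^k` the claimed identity is then an identity of rational
functions of `α`, whose denominators are nonzero exactly because `α ≠ ±β` for each pair. -/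

theorem sq_sub_sq_ne_zero {R : Type*} [CommRing R] [NoZeroDivisors R] {a b : R}
    (h₁ : a ≠ b) (h₂ : a ≠ -b) : b ^ 2 - a ^ 2 ≠ 0 := by
  rw [sq_sub_sq, add_comm]
  exact mul_ne_zero (add_eq_zero_iff_eq_neg.not.mpr h₂) (sub_ne_zero.mpr h₁.symm)

theorem lineInt_zero_one_of_norm_eq_one {α β : ℂ} (hα : ‖α‖ = 1) (hβ : ‖β‖ = 1) :
    lineInt α β 0 1 = α ^ 2 * (β ^ 2 - 1) / (β ^ 2 - α ^ 2) := by
  have hα0 : α ≠ 0 := norm_ne_zero_iff.mp (by simp [hα])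
  have hβ0 : β ≠ 0 := norm_ne_zero_iff.mp (by simp [hβ])
  have hden : β * α⁻¹ - α * β⁻¹ = (β ^ 2 - α ^ 2) / (α * β) := by field_simp
  simp only [lineInt, brkt, ← inv_eq_conj hα, ← inv_eq_conj hβ, map_zero, map_one, hden]
  by_cases h : β ^ 2 - α ^ 2 = 0
  · simp [h] -- both sides are the junk value `x / 0 = 0`
  · field_simp
    ring

theorem stmt18_general (α : ℂ) (hα : ‖α‖ = 1)
    (hab : α ≠ α ^ 2) (hab' : α ≠ -α ^ 2)
    (hac : α ≠ α ^ 3) (hac' : α ≠ -α ^ 3)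
    (hbc : α ^ 2 ≠ α ^ 3) (hbc' : α ^ 2 ≠ -α ^ 3) :
    lineInt α (α ^ 3) 0 1 * lineInt α (α ^ 2) 0 1 = lineInt (α ^ 2) (α ^ 3) 0 1 := by
  have hpow : ∀ n : ℕ, ‖α ^ n‖ = 1 := fun n => by simp [hα]
  rw [lineInt_zero_one_of_norm_eq_one hα (hpow 3), lineInt_zero_one_of_norm_eq_one hα (hpow 2),
    lineInt_zero_one_of_norm_eq_one (hpow 2) (hpow 3), div_mul_div_comm,
    div_eq_div_iff (mul_ne_zero (sq_sub_sq_ne_zero hac hac') (sq_sub_sq_ne_zero hab hab'))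
      (sq_sub_sq_ne_zero hbc hbc')]
  ring

/-- `I_{α,α³}(0,1) · I_{α,α²}(0,1) = I_{α²,α³}(0,1)`. -/
theorem stmt18 (α : ℂ) (hα : ‖α‖ = 1)
    (h1a : α ≠ 1) (h1a' : α ≠ -1)
    (h1b : α ^ 2 ≠ 1) (h1b' : α ^ 2 ≠ -1)
    (h1c : α ^ 3 ≠ 1) (h1c' : α ^ 3 ≠ -1)
    (hab : α ≠ α ^ 2) (hab' : α ≠ -α ^ 2)
    (hac : α ≠ α ^ 3) (hac' : α ≠ -α ^ 3)
    (hbc : α ^ 2 ≠ α ^ 3) (hbc' : α ^ 2 ≠ -α ^ 3) :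
    lineInt α (α ^ 3) 0 1 * lineInt α (α ^ 2) 0 1 = lineInt (α ^ 2) (α ^ 3) 0 1 :=
  stmt18_general α hα hab hab' hac hac' hbc hbc'
end
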